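/- arXiv:1607.04341 — 2 statements merged into one kernel-verified Lean document; each statement's English description precedes it below -/
import Mathlib

section
/- For every integer a and every partition ν, the operators e_a, f_a on the Fock space 𝔉 satisfy e_a(f_a(v_ν)) − f_a(e_a(v_ν)) = n_a(ν) · v_ν. -/
/-- A partition: a weakly decreasing sequence of natural numbers that is eventually zero.
Here `part i` denotes the part `ν_{i+1}` (0-based indexing of the rows `i ≥ 1`). -/
structure YPartition where
  part : ℕ → ℕ
  antitone : Antitone part
  eventually_zero : ∃ N : ℕ, ∀ i : ℕ, N ≤ i → part i = 0

/-- `AddBox ν μ a` : the Young diagram of `μ` is obtained from that of `ν` by adding a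
single cell of content `a`, i.e. `μ ∈ ν + □_a`.  (The new cell in 0-based row `i` sits in
0-based column `ν.part i`, so its content is `(ν.part i + 1) - (i + 1) = ν.part i - i`.) -/
def AddBox (ν μ : YPartition) (a : ℤ) : Prop :=
  ∃ i : ℕ, μ.part i = ν.part i + 1 ∧ (∀ j : ℕ, j ≠ i → μ.part j = ν.part j) ∧
    (ν.part i : ℤ) - (i : ℤ) = a

/-- `RemoveBox ν μ a` : the Young diagram of `μ` is obtained from that of `ν` by removing a
single cell of content `a`, i.e. `μ ∈ ν - □_a`. -/
def RemoveBox (ν μ : YPartition) (a : ℤ) : Prop := AddBox μ ν a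

open Classical in
/-- `n_a(ν)`: `1` if `ν + □_a ≠ ∅`, `-1` if `ν - □_a ≠ ∅`, and `0` otherwise. -/
noncomputable def nval (ν : YPartition) (a : ℤ) : ℤ :=
  if ∃ μ, AddBox ν μ a then 1 else if ∃ μ, RemoveBox ν μ a then -1 else 0

/-- The Fock space `𝔉`: the free `ℂ`-vector space with basis `{v_ν}` indexed by all partitions. -/
abbrev Fock : Type := YPartition →₀ ℂ

/-- The basis vector `v_ν` of the Fock space. -/
noncomputable def fockBasis (ν : YPartition) : Fock := Finsupp.single ν 1

open Classical in
noncomputable def addVec (a : ℤ) (ν : YPartition) : Fock :=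
  if h : ∃ μ, AddBox ν μ a then fockBasis h.choose else 0

open Classical in
noncomputable def removeVec (a : ℤ) (ν : YPartition) : Fock :=
  if h : ∃ μ, RemoveBox ν μ a then fockBasis h.choose else 0

/-- The operator `f_a` on the Fock space: `f_a (v_ν) = v_{ν + □_a}` if `ν + □_a = {μ}`, else `0`. -/
noncomputable def fockF (a : ℤ) : Fock →ₗ[ℂ] Fock :=
  Finsupp.lsum ℂ fun ν => LinearMap.toSpanSingleton ℂ Fock (addVec a ν)

/-- The operator `e_a` on the Fock space: `e_a (v_ν) = v_{ν - □_a}` if `ν - □_a = {μ}`, else `0`. -/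
noncomputable def fockE (a : ℤ) : Fock →ₗ[ℂ] Fock :=
  Finsupp.lsum ℂ fun ν => LinearMap.toSpanSingleton ℂ Fock (removeVec a ν)

/-! The cells that can be added to or removed from `ν` sit at the ends of its rows, and the
content `ν.part i - i` of the first empty cell of row `i` is strictly decreasing in `i`.
Hence a cell of a given content can be added (or removed) in at most one way, so `e_a` and
`f_a` act on basis vectors by at most one partition each; and `ν` cannot have both an
addable and a removable cell of content `a`, because a removable cell at the end of row `j`
makes that content drop by at least two between rows `j` and `j + 1`. So on `v_ν` at most one
of `e_a f_a` and `f_a e_a` is nonzero, and it returns `v_ν`. -/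

namespace YPartition

theorem ext_part {ν μ : YPartition} (h : ν.part = μ.part) : ν = μ := by
  cases ν; cases μ; cases h; rfl

/-- The content of the first empty cell of (0-based) row `i`. -/
def rowEnd (ν : YPartition) (i : ℕ) : ℤ := ν.part i - i

theorem rowEnd_strictAnti (ν : YPartition) : StrictAnti ν.rowEnd := by
  refine strictAnti_nat_of_succ_lt fun i => ?_
  have : ν.part (i + 1) ≤ ν.part i := ν.antitone i.le_succ
  simp only [rowEnd]
  omega

theorem rowEnd_succ_add_two_le (ν : YPartition) {j : ℕ} (h : ν.part (j + 1) < ν.part j) :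
    ν.rowEnd (j + 1) + 2 ≤ ν.rowEnd j := by
  simp only [rowEnd]
  omega

end YPartition

open YPartition

theorem AddBox.unique {ν μ μ' : YPartition} {a : ℤ} (h : AddBox ν μ a) (h' : AddBox ν μ' a) :
    μ = μ' := by
  obtain ⟨i, hi, hother, hcontent⟩ := h
  obtain ⟨i', hi', hother', hcontent'⟩ := h'
  obtain rfl : i = i' := ν.rowEnd_strictAnti.injective (hcontent.trans hcontent'.symm)
  refine ext_part (funext fun j => ?_)
  by_cases hj : j = i
  · rw [hj, hi, hi']
  · rw [hother j hj, hother' j hj]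

theorem RemoveBox.unique {ν τ τ' : YPartition} {a : ℤ} (h : RemoveBox ν τ a)
    (h' : RemoveBox ν τ' a) : τ = τ' := by
  obtain ⟨i, hi, hother, hcontent⟩ := h
  obtain ⟨i', hi', hother', hcontent'⟩ := h'
  have hrow : ν.rowEnd i = ν.rowEnd i' := by simp only [rowEnd]; omega
  obtain rfl : i = i' := ν.rowEnd_strictAnti.injective hrow
  refine ext_part (funext fun j => ?_)
  by_cases hj : j = i
  · rw [hj]; omega
  · exact (hother j hj).symm.trans (hother' j hj)

theorem not_addBox_and_removeBox {ν μ τ : YPartition} {a : ℤ} (hA : AddBox ν μ a)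
    (hR : RemoveBox ν τ a) : False := by
  obtain ⟨i, -, -, hi⟩ := hA
  obtain ⟨j, hj, hother, hcontent⟩ := hR
  have hrowi : ν.rowEnd i = a := hi
  have hrowj : ν.rowEnd j = a + 1 := by simp only [rowEnd]; omega
  have hdrop : ν.part (j + 1) < ν.part j := by
    rw [hother (j + 1) (by omega), hj]
    exact Nat.lt_succ_of_le (τ.antitone j.le_succ)
  have hgap := ν.rowEnd_succ_add_two_le hdrop
  rcases le_or_gt i j with hij | hji
  · have := ν.rowEnd_strictAnti.antitone hij
    omega
  · have := ν.rowEnd_strictAnti.antitone (show j + 1 ≤ i from hji)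
    omega

theorem addVec_eq {a : ℤ} {ν μ : YPartition} (h : AddBox ν μ a) :
    addVec a ν = fockBasis μ := by
  have hex : ∃ μ, AddBox ν μ a := ⟨μ, h⟩
  rw [addVec, dif_pos hex, hex.choose_spec.unique h]

theorem addVec_eq_zero {a : ℤ} {ν : YPartition} (h : ¬ ∃ μ, AddBox ν μ a) : addVec a ν = 0 :=
  dif_neg h

theorem removeVec_eq {a : ℤ} {ν τ : YPartition} (h : RemoveBox ν τ a) :
    removeVec a ν = fockBasis τ := by
  have hex : ∃ τ, RemoveBox ν τ a := ⟨τ, h⟩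
  rw [removeVec, dif_pos hex, hex.choose_spec.unique h]

theorem removeVec_eq_zero {a : ℤ} {ν : YPartition} (h : ¬ ∃ τ, RemoveBox ν τ a) :
    removeVec a ν = 0 :=
  dif_neg h

theorem fockF_fockBasis (a : ℤ) (ν : YPartition) : fockF a (fockBasis ν) = addVec a ν := by
  simp [fockF, fockBasis]

theorem fockE_fockBasis (a : ℤ) (ν : YPartition) : fockE a (fockBasis ν) = removeVec a ν := by
  simp [fockE, fockBasis]

/-- For every integer `a` and partition `ν`:
`e_a (f_a (v_ν)) - f_a (e_a (v_ν)) = n_a(ν) • v_ν`. -/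
theorem fock_commutator (a : ℤ) (ν : YPartition) :
    fockE a (fockF a (fockBasis ν)) - fockF a (fockE a (fockBasis ν))
      = (nval ν a : ℂ) • fockBasis ν := by
  simp only [fockF_fockBasis, fockE_fockBasis]
  by_cases hA : ∃ μ, AddBox ν μ a
  · obtain ⟨μ, hμ⟩ := hA
    have hR : ¬ ∃ τ, RemoveBox ν τ a := fun ⟨_, hτ⟩ => not_addBox_and_removeBox hμ hτ
    have hμR : RemoveBox μ ν a := hμ
    simp [nval, addVec_eq hμ, fockE_fockBasis, removeVec_eq hμR, removeVec_eq_zero hR,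
      (⟨μ, hμ⟩ : ∃ μ, AddBox ν μ a)]
  by_cases hR : ∃ τ, RemoveBox ν τ a
  · obtain ⟨τ, hτ⟩ := hR
    have hτA : AddBox τ ν a := hτ
    simp [nval, hA, addVec_eq_zero hA, removeVec_eq hτ, fockF_fockBasis, addVec_eq hτA,
      (⟨τ, hτ⟩ : ∃ τ, RemoveBox ν τ a)]
  · simp [nval, hA, hR, addVec_eq_zero hA, removeVec_eq_zero hR]
end

section
/- Let ι be a type with a degree function deg : ι → ℕ all of whose fibers are finite, let D : ι → ι → ℂ be unitriangular with unitriangular two-sided inverse D', and let Ã : ι → ι → ℂ satisfy: Ã(x,y) ≠ 0 implies deg y = deg x + 1 or deg x = deg y + 1. Then for all λ, μ ∈ ι with deg λ < deg μ, the (λ,μ) entry of the product D·Ã·D' equals Ã(λ,μ); that is, ∑_{ν,ν'} D(λ,ν)·Ã(ν,ν')·D'(ν',μ) = Ã(λ,μ). -/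
/-! A nonzero term `D λ ν · Ã ν ν' · D' ν' μ` forces `deg ν ≤ deg λ < deg μ ≤ deg ν'`, while `Ã`
only links degrees differing by one. Hence `deg ν = deg λ` and `deg ν' = deg μ = deg λ + 1`, and
unitriangularity gives `ν = λ`, `ν' = μ`: the only surviving term is `1 · Ã λ μ · 1`. -/

/-- A matrix `M : ι → ι → ℂ` is unitriangular (w.r.t. a degree function `deg`) if its diagonal
entries are `1` and `M x y ≠ 0` implies `deg y < deg x` or `x = y`. -/
def Unitriangular {ι : Type*} (deg : ι → ℕ) (M : ι → ι → ℂ) : Prop :=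
  (∀ x, M x x = 1) ∧ ∀ x y, M x y ≠ 0 → deg y < deg x ∨ x = y

namespace Unitriangular

variable {ι : Type*} {deg : ι → ℕ} {M : ι → ι → ℂ}

theorem deg_le_of_ne_zero (hM : Unitriangular deg M) {x y : ι} (h : M x y ≠ 0) :
    deg y ≤ deg x := by
  rcases hM.2 x y h with hlt | rfl
  exacts [hlt.le, le_rfl]

theorem eq_of_ne_zero_of_deg_le (hM : Unitriangular deg M) {x y : ι} (h : M x y ≠ 0)
    (hle : deg x ≤ deg y) : x = y :=
  (hM.2 x y h).resolve_left hle.not_gt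

theorem eq_of_conj_term_ne_zero {D D' A : ι → ι → ℂ}
    (hD : Unitriangular deg D) (hD' : Unitriangular deg D')
    (hA : ∀ x y : ι, A x y ≠ 0 → deg y = deg x + 1 ∨ deg x = deg y + 1)
    {lam mu nu nu' : ι} (hlt : deg lam < deg mu)
    (h : D lam nu * A nu nu' * D' nu' mu ≠ 0) : nu = lam ∧ nu' = mu := by
  obtain ⟨⟨hDne, hAne⟩, hD'ne⟩ := mul_ne_zero_iff.mp h |>.imp_left mul_ne_zero_iff.mp
  have hnu := hD.deg_le_of_ne_zero hDne
  have hnu' := hD'.deg_le_of_ne_zero hD'ne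
  have hstep : deg nu' = deg nu + 1 := (hA nu nu' hAne).resolve_right (by omega)
  exact ⟨(hD.eq_of_ne_zero_of_deg_le hDne (by omega)).symm,
    hD'.eq_of_ne_zero_of_deg_le hD'ne (by omega)⟩

end Unitriangular

open Classical in
theorem conjugation_above_diagonal_general {ι : Type*} (deg : ι → ℕ)
    (D D' A : ι → ι → ℂ)
    (hD : Unitriangular deg D) (hD' : Unitriangular deg D')
    (hA : ∀ x y : ι, A x y ≠ 0 → deg y = deg x + 1 ∨ deg x = deg y + 1)
    (lam mu : ι) (hlt : deg lam < deg mu) :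
    (∑ᶠ nu : ι, ∑ᶠ nu' : ι, D lam nu * A nu nu' * D' nu' mu) = A lam mu := by
  have hterm {nu nu'} := hD.eq_of_conj_term_ne_zero (nu := nu) (nu' := nu') hD' hA hlt
  rw [finsum_eq_single _ lam, finsum_eq_single _ mu, hD.1, hD'.1, one_mul, mul_one]
  · exact fun nu' hne => not_not.mp fun h => hne (hterm h).2
  · exact fun nu hne => finsum_eq_zero_of_forall_eq_zero fun nu' =>
      not_not.mp fun h => hne (hterm h).1

open Classical in
/-- If `D` is unitriangular with unitriangular two-sided inverse `D'`, and `Ã` is nonzero only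
in positions where the degrees differ by exactly one, then above the diagonal (i.e. for
`deg λ < deg μ`) the entries of `D·Ã·D'` agree with those of `Ã`. -/
theorem conjugation_above_diagonal {ι : Type*} (deg : ι → ℕ)
    (hfin : ∀ m : ℕ, {x : ι | deg x = m}.Finite)
    (D D' A : ι → ι → ℂ)
    (hD : Unitriangular deg D) (hD' : Unitriangular deg D')
    (hinv1 : ∀ lam mu : ι, (∑ᶠ nu : ι, D lam nu * D' nu mu) = if lam = mu then 1 else 0)
    (hinv2 : ∀ lam mu : ι, (∑ᶠ nu : ι, D' lam nu * D nu mu) = if lam = mu then 1 else 0)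
    (hA : ∀ x y : ι, A x y ≠ 0 → deg y = deg x + 1 ∨ deg x = deg y + 1)
    (lam mu : ι) (hlt : deg lam < deg mu) :
    (∑ᶠ nu : ι, ∑ᶠ nu' : ι, D lam nu * A nu nu' * D' nu' mu) = A lam mu :=
  conjugation_above_diagonal_general deg D D' A hD hD' hA lam mu hlt
end
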